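/- Let K ⊆ ℂ̄ be a compact set such that K ∩ σ̃_ap(A) ⊆ σ_{π+}(A) (respectively K ∩ σ̃_ap(A) ⊆ σ_{π−}(A)). Then there exist an open neighborhood U of K in ℂ̄, a linear manifold H₀ ⊆ H of finite codimension, and ε > 0 such that for every λ ∈ U \ {∞} and every x ∈ H₀ ∩ dom A with ‖(A−λ)x‖ ≤ ε‖x‖ one has [x,x] ≥ ε‖x‖² (respectively −[x,x] ≥ ε‖x‖²). In this case U ∩ σ̃_ap(A) ⊆ σ_{π+}(A) (respectively U ∩ σ̃_ap(A) ⊆ σ_{π−}(A)). -/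

import Mathlib

open Filter Topology OnePoint Set

noncomputable section

namespace Paper

variable {H : Type*} [NormedAddCommGroup H] [InnerProductSpace ℂ H]

/-- The indefinite inner product `[x,y] := (Gx, y)` induced by the Gram operator `G`. -/
def brk (G : H →L[ℂ] H) (x y : H) : ℂ := inner ℂ (G x) y

/-- The real part of `[x,y]`; note that `[x,x]` is real when `G` is selfadjoint. -/
def brkRe (G : H →L[ℂ] H) (x y : H) : ℝ := (brk G x y).re

/-- A linear manifold of finite codimension in `H`. -/
def FinCodim (M : Submodule ℂ H) : Prop := FiniteDimensional ℂ (H ⧸ M)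

/-- An approximate eigensequence of `A` at the finite point `l`. -/
def IsApproxSeq (A : H →ₗ.[ℂ] H) (l : ℂ) (x : ℕ → A.domain) : Prop :=
  (∀ n, ‖(x n : H)‖ = 1) ∧
    Tendsto (fun n => A (x n) - l • ((x n : H))) atTop (𝓝 0)

/-- The approximate point spectrum of `A`. -/
def sigmaAp (A : H →ₗ.[ℂ] H) : Set ℂ := {l | ∃ x : ℕ → A.domain, IsApproxSeq A l x}

/-- The type `π₊` condition at `l` relative to the linear manifold `M`. -/
def PiPlusCond (G : H →L[ℂ] H) (A : H →ₗ.[ℂ] H) (l : ℂ) (M : Submodule ℂ H) : Prop :=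
  ∀ x : ℕ → A.domain, (∀ n, (x n : H) ∈ M) → IsApproxSeq A l x →
    0 < atTop.liminf (fun n => brkRe G (x n) (x n))

/-- The type `π₋` condition at `l` relative to the linear manifold `M`. -/
def PiMinusCond (G : H →L[ℂ] H) (A : H →ₗ.[ℂ] H) (l : ℂ) (M : Submodule ℂ H) : Prop :=
  ∀ x : ℕ → A.domain, (∀ n, (x n : H) ∈ M) → IsApproxSeq A l x →
    atTop.limsup (fun n => brkRe G (x n) (x n)) < 0

/-- `l` is a spectral point of type `π₊` of `A`. -/
def sigmaPiPlusAt (G : H →L[ℂ] H) (A : H →ₗ.[ℂ] H) (l : ℂ) : Prop :=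
  l ∈ sigmaAp A ∧ ∃ M : Submodule ℂ H, FinCodim M ∧ PiPlusCond G A l M

/-- `l` is a spectral point of type `π₋` of `A`. -/
def sigmaPiMinusAt (G : H →L[ℂ] H) (A : H →ₗ.[ℂ] H) (l : ℂ) : Prop :=
  l ∈ sigmaAp A ∧ ∃ M : Submodule ℂ H, FinCodim M ∧ PiMinusCond G A l M

/-- `l` is a spectral point of positive type of `A`. -/
def sigmaPPAt (G : H →L[ℂ] H) (A : H →ₗ.[ℂ] H) (l : ℂ) : Prop :=
  l ∈ sigmaAp A ∧ PiPlusCond G A l ⊤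

/-- `l` is a spectral point of negative type of `A`. -/
def sigmaMMAt (G : H →L[ℂ] H) (A : H →ₗ.[ℂ] H) (l : ℂ) : Prop :=
  l ∈ sigmaAp A ∧ PiMinusCond G A l ⊤

/-- An approximate eigensequence of `A` at `∞`. -/
def IsInftyApproxSeq (A : H →ₗ.[ℂ] H) (x : ℕ → A.domain) : Prop :=
  (∀ n, ‖A (x n)‖ = 1) ∧ Tendsto (fun n => ((x n : H))) atTop (𝓝 0)

/-- `A` is a bounded operator. -/
def IsBoundedOp (A : H →ₗ.[ℂ] H) : Prop := ∃ C : ℝ, ∀ x : A.domain, ‖A x‖ ≤ C * ‖(x : H)‖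

/-- The type `π₊` condition at `∞` relative to the linear manifold `M`. -/
def InftyPiPlusCond (G : H →L[ℂ] H) (A : H →ₗ.[ℂ] H) (M : Submodule ℂ H) : Prop :=
  ∀ x : ℕ → A.domain, (∀ n, (x n : H) ∈ M) → IsInftyApproxSeq A x →
    0 < atTop.liminf (fun n => brkRe G (A (x n)) (A (x n)))

/-- The type `π₋` condition at `∞` relative to the linear manifold `M`. -/
def InftyPiMinusCond (G : H →L[ℂ] H) (A : H →ₗ.[ℂ] H) (M : Submodule ℂ H) : Prop :=
  ∀ x : ℕ → A.domain, (∀ n, (x n : H) ∈ M) → IsInftyApproxSeq A x →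
    atTop.limsup (fun n => brkRe G (A (x n)) (A (x n))) < 0

/-- `∞` is a spectral point of type `π₊` of `A`. -/
def sigmaPiPlusInfty (G : H →L[ℂ] H) (A : H →ₗ.[ℂ] H) : Prop :=
  ¬ IsBoundedOp A ∧ ∃ M : Submodule ℂ H, FinCodim M ∧ InftyPiPlusCond G A M

/-- `∞` is a spectral point of type `π₋` of `A`. -/
def sigmaPiMinusInfty (G : H →L[ℂ] H) (A : H →ₗ.[ℂ] H) : Prop :=
  ¬ IsBoundedOp A ∧ ∃ M : Submodule ℂ H, FinCodim M ∧ InftyPiMinusCond G A M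

/-- `∞` is a spectral point of positive type of `A`. -/
def sigmaPPInfty (G : H →L[ℂ] H) (A : H →ₗ.[ℂ] H) : Prop :=
  ¬ IsBoundedOp A ∧ InftyPiPlusCond G A ⊤

/-- `∞` is a spectral point of negative type of `A`. -/
def sigmaMMInfty (G : H →L[ℂ] H) (A : H →ₗ.[ℂ] H) : Prop :=
  ¬ IsBoundedOp A ∧ InftyPiMinusCond G A ⊤

/-- A subset of the Riemann sphere `ℂ̄ = ℂ ∪ {∞}` given by a condition at finite
points and a condition at `∞`. -/
def extSet (Pf : ℂ → Prop) (Pinf : Prop) : Set (OnePoint ℂ) :=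
  {p | (∃ l : ℂ, p = (l : OnePoint ℂ) ∧ Pf l) ∨ (p = ∞ ∧ Pinf)}

/-- The extended approximate point spectrum `σ̃_ap(A) ⊆ ℂ̄`. -/
def extSigmaAp (A : H →ₗ.[ℂ] H) : Set (OnePoint ℂ) :=
  extSet (fun l => l ∈ sigmaAp A) (¬ IsBoundedOp A)

/-- The set `σ_{π+}(A) ⊆ ℂ̄`. -/
def extPiPlus (G : H →L[ℂ] H) (A : H →ₗ.[ℂ] H) : Set (OnePoint ℂ) :=
  extSet (sigmaPiPlusAt G A) (sigmaPiPlusInfty G A)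

/-- The set `σ_{π−}(A) ⊆ ℂ̄`. -/
def extPiMinus (G : H →L[ℂ] H) (A : H →ₗ.[ℂ] H) : Set (OnePoint ℂ) :=
  extSet (sigmaPiMinusAt G A) (sigmaPiMinusInfty G A)

/-- The set `σ_{++}(A) ⊆ ℂ̄`. -/
def extPP (G : H →L[ℂ] H) (A : H →ₗ.[ℂ] H) : Set (OnePoint ℂ) :=
  extSet (sigmaPPAt G A) (sigmaPPInfty G A)

/-- The set `σ_{−−}(A) ⊆ ℂ̄`. -/
def extMM (G : H →L[ℂ] H) (A : H →ₗ.[ℂ] H) : Set (OnePoint ℂ) :=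
  extSet (sigmaMMAt G A) (sigmaMMInfty G A)

/-- The extended set of points of regular type, `r̃(A) = ℂ̄ \ σ̃_ap(A)`. -/
def extReg (A : H →ₗ.[ℂ] H) : Set (OnePoint ℂ) := (extSigmaAp A)ᶜ

/-- `A` is `G`-symmetric: `[Ax,y] = [x,Ay]` for `x, y ∈ dom A`. -/
def GSymm (G : H →L[ℂ] H) (A : H →ₗ.[ℂ] H) : Prop :=
  ∀ x y : A.domain, brk G (A x) (y : H) = brk G (x : H) (A y)

/-- A bounded operator `T` is `G`-symmetric (equivalently, `G`-selfadjoint):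
`[Tx,y] = [x,Ty]` for all `x, y`. -/
def GSymmB (G T : H →L[ℂ] H) : Prop := ∀ x y : H, brk G (T x) y = brk G x (T y)

/-- `l ∈ ρ(A)`: the operator `A − l` maps `dom A` bijectively onto `H`
with a bounded inverse. -/
def InResolventSet (A : H →ₗ.[ℂ] H) (l : ℂ) : Prop :=
  (∀ y : H, ∃ x : A.domain, A x - l • (x : H) = y) ∧
  ∃ c : ℝ, 0 < c ∧ ∀ x : A.domain, c * ‖(x : H)‖ ≤ ‖A x - l • (x : H)‖

/-- The spectrum `σ(A) = ℂ \ ρ(A)`. -/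
def spectrumSet (A : H →ₗ.[ℂ] H) : Set ℂ := {l | ¬ InResolventSet A l}

/-- `ker (A − l)` as a submodule of `H`. -/
def kerAt (A : H →ₗ.[ℂ] H) (l : ℂ) : Submodule ℂ H where
  carrier := {x | ∃ hx : x ∈ A.domain, A ⟨x, hx⟩ = l • x}
  zero_mem' := ⟨A.domain.zero_mem, by
    have : (⟨(0 : H), A.domain.zero_mem⟩ : A.domain) = 0 := rfl
    rw [this, A.map_zero, smul_zero]⟩
  add_mem' := by
    rintro a b ⟨ha, ea⟩ ⟨hb, eb⟩
    refine ⟨A.domain.add_mem ha hb, ?_⟩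
    have : (⟨a + b, A.domain.add_mem ha hb⟩ : A.domain) = ⟨a, ha⟩ + ⟨b, hb⟩ := rfl
    rw [this, A.map_add, ea, eb, smul_add]
  smul_mem' := by
    rintro c x ⟨hx, ex⟩
    refine ⟨A.domain.smul_mem c hx, ?_⟩
    have : (⟨c • x, A.domain.smul_mem c hx⟩ : A.domain) = c • (⟨x, hx⟩ : A.domain) := rfl
    rw [this, A.map_smul, ex, smul_comm]

/-- The range of `A − l`. -/
def ranAt (A : H →ₗ.[ℂ] H) (l : ℂ) : Set H :=
  {y | ∃ x : A.domain, A x - l • (x : H) = y}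

/-- A uniformly positive subspace. -/
def IsUnifPos (G : H →L[ℂ] H) (L : Submodule ℂ H) : Prop :=
  ∃ δ : ℝ, 0 < δ ∧ ∀ x ∈ L, δ * ‖x‖ ^ 2 ≤ brkRe G x x

/-- A uniformly negative subspace. -/
def IsUnifNeg (G : H →L[ℂ] H) (L : Submodule ℂ H) : Prop :=
  ∃ δ : ℝ, 0 < δ ∧ ∀ x ∈ L, δ * ‖x‖ ^ 2 ≤ -brkRe G x x

/-- A positive set: every nonzero element `x` has `[x,x] > 0`. -/
def IsPosSet (G : H →L[ℂ] H) (S : Set H) : Prop := ∀ x ∈ S, x ≠ 0 → 0 < brkRe G x x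

/-- A negative set: every nonzero element `x` has `[x,x] < 0`. -/
def IsNegSet (G : H →L[ℂ] H) (S : Set H) : Prop := ∀ x ∈ S, x ≠ 0 → brkRe G x x < 0

/-- The orthogonal companion `L^{[⊥]}` of `L` with respect to `[·,·]`. -/
def orthCompanion (G : H →L[ℂ] H) (L : Submodule ℂ H) : Submodule ℂ H where
  carrier := {x | ∀ y ∈ L, brk G x y = 0}
  zero_mem' := by intro y hy; simp [brk]
  add_mem' := by
    intro a b ha hb y hy
    simp only [brk, map_add, inner_add_left] at *
    rw [ha y hy, hb y hy, add_zero]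
  smul_mem' := by
    intro c x hx y hy
    simp only [brk, _root_.map_smul, inner_smul_left] at *
    rw [hx y hy, mul_zero]

/-- The isotropic part `L° = L ∩ L^{[⊥]}` of `L`. -/
def isoPart (G : H →L[ℂ] H) (L : Submodule ℂ H) : Submodule ℂ H := L ⊓ orthCompanion G L

/-- A fundamental decomposition `L = L₊ [∔] L₋ [∔] L°` of `L`. -/
def IsFundDecomp (G : H →L[ℂ] H) (L Lp Lm L0 : Submodule ℂ H) : Prop :=
  Lp ≤ L ∧ Lm ≤ L ∧ L0 = isoPart G L ∧
  IsPosSet G (Lp : Set H) ∧ IsNegSet G (Lm : Set H) ∧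
  (∀ x ∈ Lp, ∀ y ∈ Lm, brk G x y = 0) ∧
  (∀ x ∈ L, ∃ p ∈ Lp, ∃ m ∈ Lm, ∃ z ∈ L0, x = p + m + z) ∧
  (∀ p ∈ Lp, ∀ m ∈ Lm, ∀ z ∈ L0, p + m + z = 0 → p = 0 ∧ m = 0 ∧ z = 0)

/-- A Jordan chain `x 0, …, x (n-1)` of `A` at `l` of length `n`. -/
def IsJordanChain (A : H →ₗ.[ℂ] H) (l : ℂ) (n : ℕ) (x : ℕ → A.domain) : Prop :=
  0 < n ∧ (∀ i < n, (x i : H) ≠ 0) ∧ A (x 0) = l • ((x 0 : H)) ∧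
  ∀ i, i + 1 < n → A (x (i + 1)) = l • ((x (i + 1) : H)) + (x i : H)

/-- A Jordan chain of `A` at `l` of infinite length. -/
def IsInfJordanChain (A : H →ₗ.[ℂ] H) (l : ℂ) (x : ℕ → A.domain) : Prop :=
  (∀ n, (x n : H) ≠ 0) ∧ A (x 0) = l • ((x 0 : H)) ∧
  ∀ n, A (x (n + 1)) = l • ((x (n + 1) : H)) + (x n : H)

/-- The algebraic eigenspace `L_λ(A) = ⋃ₙ ker (A − λ)ⁿ`. -/
def algEig (A : H →ₗ.[ℂ] H) (l : ℂ) : Set H :=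
  {x | ∃ n : ℕ, ∃ c : ℕ → H, c 0 = 0 ∧ c n = x ∧
    ∀ i < n, ∃ h : c (i + 1) ∈ A.domain, A ⟨c (i + 1), h⟩ = l • c (i + 1) + c i}

/-- The bounded operator `B` commutes with `A`, i.e. `BA ⊆ AB`. -/
def CommutesWith (B : H →L[ℂ] H) (A : H →ₗ.[ℂ] H) : Prop :=
  ∀ x : A.domain, ∃ h : B (x : H) ∈ A.domain, A ⟨B (x : H), h⟩ = B (A x)

/-- `R` is the (everywhere defined, bounded) resolvent of `A` at `μ`. -/
def IsResolventOf (A : H →ₗ.[ℂ] H) (mu : ℂ) (R : H →L[ℂ] H) : Prop :=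
  (∀ y : H, ∃ h : R y ∈ A.domain, A ⟨R y, h⟩ - mu • R y = y) ∧
  (∀ x : A.domain, R (A x - mu • (x : H)) = (x : H))

/-- The system `𝓜(I)` of all finite unions of bounded intervals whose closure
is contained in `I`. -/
def MSet (I : Set ℝ) : Set (Set ℝ) :=
  {D | ∃ F : Finset (Set ℝ),
    (∀ J ∈ F, J.OrdConnected ∧ Bornology.IsBounded J ∧ closure J ⊆ I) ∧ D = ⋃₀ ↑F}

/-- The system `𝓜_S(I)`: elements of `𝓜(I)` whose boundary does not meet `S`. -/
def MSetS (I : Set ℝ) (S : Set ℝ) : Set (Set ℝ) :=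
  {D | D ∈ MSet I ∧ frontier D ∩ S = ∅}

/-- `l` belongs to the resolvent set of the restriction `A|L` of `A`
to the (`A`-invariant) subspace `L`. -/
def InResolventRestr (A : H →ₗ.[ℂ] H) (L : Submodule ℂ H) (l : ℂ) : Prop :=
  (∀ x : A.domain, (x : H) ∈ L → A x - l • (x : H) ∈ L) ∧
  (∀ y ∈ L, ∃ x : A.domain, (x : H) ∈ L ∧ A x - l • (x : H) = y) ∧
  ∃ c : ℝ, 0 < c ∧ ∀ x : A.domain, (x : H) ∈ L → c * ‖(x : H)‖ ≤ ‖A x - l • (x : H)‖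

/-- The spectrum of the restriction `A|L`. -/
def specRestr (A : H →ₗ.[ℂ] H) (L : Submodule ℂ H) : Set ℂ :=
  {l | ¬ InResolventRestr A L l}

/-- The closure of `S ∩ dom A` with respect to the graph norm of `A`. -/
def graphClosure (A : H →ₗ.[ℂ] H) (S : Set H) : Set H :=
  {x | ∃ hx : x ∈ A.domain, ((x, A ⟨x, hx⟩) : H × H) ∈
    closure {p : H × H | ∃ hy : p.1 ∈ A.domain, p.1 ∈ S ∧ A ⟨p.1, hy⟩ = p.2}}

/-- The sum `A + F` of `A` and a bounded operator `F`, with domain `dom A`. -/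
def addCLM (A : H →ₗ.[ℂ] H) (F : H →L[ℂ] H) : H →ₗ.[ℂ] H :=
  ⟨A.domain, A.toFun + (F.toLinearMap.comp A.domain.subtype)⟩

/-- The composition `G ∘ A` as a partially defined operator with domain `dom A`. -/
def compCLM (G : H →L[ℂ] H) (A : H →ₗ.[ℂ] H) : H →ₗ.[ℂ] H :=
  ⟨A.domain, G.toLinearMap.comp A.toFun⟩

/-- A map `f` defined on `dom A` is `A`-compact: any sequence bounded in the graph
norm of `A` has a subsequence whose image under `f` converges. -/
def IsACompact (A : H →ₗ.[ℂ] H) (f : A.domain → H) : Prop :=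
  ∀ x : ℕ → A.domain, (∃ C : ℝ, ∀ n, ‖(x n : H)‖ + ‖A (x n)‖ ≤ C) →
    ∃ φ : ℕ → ℕ, StrictMono φ ∧ ∃ y : H, Tendsto (fun n => f (x (φ n))) atTop (𝓝 y)

/-- `(L, [·,·])` is a Hilbert space: `[·,·]` is positive definite on `L` and `L` is
complete with respect to the induced norm. -/
def IsHilbertWrt (G : H →L[ℂ] H) (L : Submodule ℂ H) : Prop :=
  IsPosSet G (L : Set H) ∧
  ∀ u : ℕ → H, (∀ n, u n ∈ L) →
    (∀ ε : ℝ, 0 < ε → ∃ N, ∀ m ≥ N, ∀ n ≥ N, brkRe G (u m - u n) (u m - u n) < ε) →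
    ∃ v ∈ L, Tendsto (fun n => brkRe G (u n - v) (u n - v)) atTop (𝓝 0)

/-- `(L, −[·,·])` is a Hilbert space. -/
def IsAntiHilbertWrt (G : H →L[ℂ] H) (L : Submodule ℂ H) : Prop :=
  IsNegSet G (L : Set H) ∧
  ∀ u : ℕ → H, (∀ n, u n ∈ L) →
    (∀ ε : ℝ, 0 < ε → ∃ N, ∀ m ≥ N, ∀ n ≥ N, -brkRe G (u m - u n) (u m - u n) < ε) →
    ∃ v ∈ L, Tendsto (fun n => brkRe G (u n - v) (u n - v)) atTop (𝓝 0)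


/-- The sequence `x` converges weakly to `0` in `H`. -/
def WeakNullSeq (x : ℕ → H) : Prop :=
  ∀ y : H, Tendsto (fun n => (inner ℂ y (x n) : ℂ)) atTop (𝓝 0)

section Helpers

lemma abs_brkRe_le (G : H →L[ℂ] H) (x y : H) : |brkRe G x y| ≤ ‖G‖ * ‖x‖ * ‖y‖ := by
  have h1 : |brkRe G x y| ≤ ‖brk G x y‖ := Complex.abs_re_le_norm _
  refine h1.trans ?_
  have h2 : ‖brk G x y‖ ≤ ‖G x‖ * ‖y‖ := by
    simpa [brk] using norm_inner_le_norm (𝕜 := ℂ) (G x) y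
  refine h2.trans ?_
  exact mul_le_mul_of_nonneg_right (G.le_opNorm x) (norm_nonneg y)

lemma brkRe_smul (G : H →L[ℂ] H) (c : ℂ) (x : H) :
    brkRe G (c • x) (c • x) = ‖c‖ ^ 2 * brkRe G x x := by
  have h : brk G (c • x) (c • x) = ((‖c‖ ^ 2 : ℝ) : ℂ) * brk G x x := by
    simp only [brk, _root_.map_smul, inner_smul_left, inner_smul_right]
    rw [← mul_assoc, Complex.mul_conj']
    norm_cast
  simp only [brkRe, h, Complex.re_ofReal_mul]

lemma brkRe_add (G : H →L[ℂ] H) (a b : H) :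
    brkRe G (a + b) (a + b) = brkRe G a a + brkRe G a b + brkRe G b a + brkRe G b b := by
  simp only [brkRe, brk, map_add, inner_add_left, inner_add_right]
  simp
  ring

lemma brkRe_neg_op (G : H →L[ℂ] H) (x y : H) : brkRe (-G) x y = -brkRe G x y := by
  simp [brkRe, brk, inner_neg_left]

lemma finCodim_top : FinCodim (⊤ : Submodule ℂ H) := by
  have : Subsingleton (H ⧸ (⊤ : Submodule ℂ H)) :=
    Submodule.Quotient.subsingleton_iff.2 rfl
  unfold FinCodim
  infer_instance

lemma finCodim_inf {M N : Submodule ℂ H} (hM : FinCodim M) (hN : FinCodim N) :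
    FinCodim (M ⊓ N) := by
  unfold FinCodim at *
  haveI := hM
  haveI := hN
  let f : H →ₗ[ℂ] (H ⧸ M) × (H ⧸ N) := M.mkQ.prod N.mkQ
  have hker : LinearMap.ker f = M ⊓ N := by
    ext x
    simp [f, LinearMap.mem_ker, Prod.ext_iff, Submodule.mem_inf]
  let e := (Submodule.quotEquivOfEq _ _ hker.symm).trans f.quotKerEquivRange
  exact Module.Finite.equiv e.symm

lemma normed_elt {A : H →ₗ.[ℂ] H} (x : A.domain) (hx : (x : H) ≠ 0) :
    ∃ y : A.domain, ‖(y : H)‖ = 1 ∧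
      (∀ l : ℂ, A y - l • (y : H) = ((‖(x : H)‖ : ℂ))⁻¹ • (A x - l • (x : H))) ∧
      (y : H) = ((‖(x : H)‖ : ℂ))⁻¹ • (x : H) := by
  refine ⟨((‖(x : H)‖ : ℂ))⁻¹ • x, ?_, ?_, rfl⟩
  · have h0 : ((((‖(x : H)‖ : ℂ))⁻¹ • x : A.domain) : H) = ((‖(x : H)‖ : ℂ))⁻¹ • (x : H) := rfl
    rw [h0, norm_smul]
    simp [inv_mul_cancel₀ (norm_ne_zero_iff.2 hx)]
  · intro l
    rw [A.map_smul]
    have h0 : ((((‖(x : H)‖ : ℂ))⁻¹ • x : A.domain) : H) = ((‖(x : H)‖ : ℂ))⁻¹ • (x : H) := rfl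
    rw [h0, smul_comm l, smul_sub]

lemma lower_bound_of_not_sigmaAp {A : H →ₗ.[ℂ] H} {l : ℂ} (h : l ∉ sigmaAp A) :
    ∃ c : ℝ, 0 < c ∧ ∀ x : A.domain, c * ‖(x : H)‖ ≤ ‖A x - l • (x : H)‖ := by
  by_contra hc
  push_neg at hc
  apply h
  have key : ∀ n : ℕ, ∃ y : A.domain, ‖(y : H)‖ = 1 ∧
      ‖A y - l • (y : H)‖ ≤ 1 / (n + 1) := by
    intro n
    obtain ⟨x, hx⟩ := hc (1 / (n + 1)) (by positivity)
    have hxne : (x : H) ≠ 0 := by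
      intro h0
      rw [h0] at hx
      have hx0 : x = 0 := Subtype.ext h0
      rw [hx0] at hx
      simp at hx
    obtain ⟨y, hy1, hy2, -⟩ := normed_elt x hxne
    refine ⟨y, hy1, ?_⟩
    rw [hy2 l, norm_smul]
    have hxpos : 0 < ‖(x : H)‖ := norm_pos_iff.2 hxne
    have hn : ‖(((‖(x : H)‖ : ℂ))⁻¹ : ℂ)‖ = ‖(x : H)‖⁻¹ := by
      simp
    rw [hn]
    calc ‖(x : H)‖⁻¹ * ‖A x - l • (x : H)‖ ≤ ‖(x : H)‖⁻¹ * (1 / (n + 1) * ‖(x : H)‖) :=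
          mul_le_mul_of_nonneg_left hx.le (inv_nonneg.2 (norm_nonneg _))
      _ = 1 / (n + 1) := by field_simp
  choose y hy1 hy2 using key
  exact ⟨y, hy1, squeeze_zero_norm hy2 tendsto_one_div_add_atTop_nhds_zero_nat⟩

/-- A bounded real sequence: `limsup f < 0 ↔ 0 < liminf (-f)`. -/
lemma limsup_neg_iff_liminf_pos {f : ℕ → ℝ} {C : ℝ} (hb : ∀ n, |f n| ≤ C) :
    atTop.limsup f < 0 ↔ 0 < atTop.liminf (fun n => -f n) := by
  have hub : ∀ n, f n ≤ C := fun n => (abs_le.1 (hb n)).2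
  have hlb : ∀ n, -C ≤ f n := fun n => (abs_le.1 (hb n)).1
  constructor
  · intro h
    obtain ⟨c, hc1, hc2⟩ := exists_between h
    have hev : ∀ᶠ n in atTop, f n < c :=
      eventually_lt_of_limsup_lt hc1 (isBoundedUnder_of ⟨C, hub⟩)
    have : (-c : ℝ) ≤ atTop.liminf (fun n => -f n) := by
      refine le_liminf_of_le ?_ ?_
      · exact isCoboundedUnder_ge_of_le atTop (fun n => neg_le.2 (hlb n))
      · exact hev.mono fun n hn => by linarith
    linarith
  · intro h
    obtain ⟨c, hc1, hc2⟩ := exists_between h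
    have hev : ∀ᶠ n in atTop, c < -f n :=
      eventually_lt_of_lt_liminf hc2 (isBoundedUnder_of ⟨-C, fun n => by simpa using hub n⟩)
    have : atTop.limsup f ≤ -c := by
      refine limsup_le_of_le ?_ ?_
      · exact isCoboundedUnder_le_of_le atTop hlb
      · exact hev.mono fun n hn => by linarith
    linarith

/-- Quantitative bound around a finite spectral point of type `π₊`. -/
lemma quant_of_piPlus (G : H →L[ℂ] H) {A : H →ₗ.[ℂ] H} {l : ℂ} {M : Submodule ℂ H}
    (hM : PiPlusCond G A l M) :
    ∃ e : ℝ, 0 < e ∧ ∀ lam : ℂ, dist lam l < e → ∀ x : A.domain, (x : H) ∈ M →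
      ‖A x - lam • (x : H)‖ ≤ e * ‖(x : H)‖ →
        e * ‖(x : H)‖ ^ 2 ≤ brkRe G (x : H) (x : H) := by
  by_contra hcon
  push_neg at hcon
  have key : ∀ n : ℕ, ∃ y : A.domain, ‖(y : H)‖ = 1 ∧ (y : H) ∈ M ∧
      ‖A y - l • (y : H)‖ ≤ 2 / (n + 1) ∧
      brkRe G (y : H) (y : H) < 1 / (n + 1) := by
    intro n
    obtain ⟨lam, hlam, x, hxM, hxa, hxb⟩ := hcon (1 / (n + 1)) (by positivity)
    have hxne : (x : H) ≠ 0 := by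
      intro h0
      rw [h0] at hxb
      simp [brkRe, brk] at hxb
    have hxpos : 0 < ‖(x : H)‖ := norm_pos_iff.2 hxne
    obtain ⟨y, hy1, hy2, hy3⟩ := normed_elt x hxne
    have hcn : ‖(((‖(x : H)‖ : ℂ))⁻¹ : ℂ)‖ = ‖(x : H)‖⁻¹ := by simp
    refine ⟨y, hy1, ?_, ?_, ?_⟩
    · rw [hy3]
      exact M.smul_mem _ hxM
    · have h1 : ‖A y - lam • (y : H)‖ ≤ 1 / (n + 1) := by
        rw [hy2 lam, norm_smul, hcn]
        calc ‖(x : H)‖⁻¹ * ‖A x - lam • (x : H)‖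
            ≤ ‖(x : H)‖⁻¹ * (1 / (n + 1) * ‖(x : H)‖) :=
              mul_le_mul_of_nonneg_left hxa (inv_nonneg.2 (norm_nonneg _))
          _ = 1 / (n + 1) := by field_simp
      have h2 : A y - l • (y : H) = (A y - lam • (y : H)) + (lam - l) • (y : H) := by
        rw [sub_smul]
        abel
      rw [h2]
      calc ‖(A y - lam • (y : H)) + (lam - l) • (y : H)‖
          ≤ ‖A y - lam • (y : H)‖ + ‖(lam - l) • (y : H)‖ := norm_add_le _ _
        _ ≤ 1 / (n + 1) + 1 / (n + 1) := by
            refine add_le_add h1 ?_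
            rw [norm_smul, hy1, mul_one]
            have : dist lam l < 1 / (n + 1) := hlam
            rw [dist_eq_norm] at this
            exact this.le
        _ = 2 / (n + 1) := by ring
    · rw [hy3, brkRe_smul, hcn]
      have h3 : brkRe G (x : H) (x : H) < 1 / (n + 1) * ‖(x : H)‖ ^ 2 := hxb
      have h4 : (0 : ℝ) < (‖(x : H)‖⁻¹) ^ 2 := by positivity
      calc (‖(x : H)‖⁻¹) ^ 2 * brkRe G (x : H) (x : H)
          < (‖(x : H)‖⁻¹) ^ 2 * (1 / ((n : ℝ) + 1) * ‖(x : H)‖ ^ 2) :=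
            mul_lt_mul_of_pos_left h3 h4
        _ = 1 / ((n : ℝ) + 1) := by
            field_simp
  choose y hy1 hyM hy2 hy3 using key
  have happrox : IsApproxSeq A l y := by
    refine ⟨hy1, squeeze_zero_norm hy2 ?_⟩
    have h0 : Tendsto (fun n : ℕ => 2 * (1 / (n + 1) : ℝ)) atTop (𝓝 (2 * 0)) :=
      tendsto_one_div_add_atTop_nhds_zero_nat.const_mul 2
    simpa using h0.congr fun n => by ring
  have hpos := hM y hyM happrox
  have hle : atTop.liminf (fun n => brkRe G (y n : H) (y n : H)) ≤
      atTop.liminf (fun n : ℕ => (1 / ((n : ℝ) + 1) : ℝ)) := by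
    refine liminf_le_liminf (Eventually.of_forall fun n => (hy3 n).le) ?_ ?_
    · refine isBoundedUnder_of ⟨-‖G‖, fun n => ?_⟩
      have hb := abs_brkRe_le G (y n : H) (y n : H)
      rw [hy1 n] at hb
      simp only [mul_one] at hb
      exact neg_le_of_abs_le hb
    · exact isCoboundedUnder_ge_of_le atTop (fun n : ℕ => by
        have : (0:ℝ) < (n : ℝ) + 1 := by positivity
        calc (1 / ((n : ℝ) + 1) : ℝ) ≤ 1 / 1 := by
              apply one_div_le_one_div_of_le <;> linarith
          _ = 1 := by norm_num)
  rw [tendsto_one_div_add_atTop_nhds_zero_nat.liminf_eq] at hle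
  linarith

private lemma div_bound_aux {g e L T S : ℝ} (hg : 0 ≤ g) (he : 0 < e) (he1 : e ≤ 1)
    (hT1 : 1 ≤ T) (hL : 0 ≤ L) (hLT : L ≤ 2 * T)
    (hS : S ≤ L ^ 2 * e + 2 * g * L * e + g * e ^ 2) :
    (T⁻¹) ^ 2 * S ≤ (4 + 5 * g) * e := by
  have hT0 : (0:ℝ) < T := lt_of_lt_of_le one_pos hT1
  have key : S ≤ (4 + 5 * g) * e * T ^ 2 := by
    nlinarith [mul_nonneg (mul_nonneg hg he.le) (sub_nonneg.2 hLT),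
      mul_nonneg he.le (mul_nonneg (sub_nonneg.2 hLT) (show (0:ℝ) ≤ 2*T + L by linarith)),
      mul_nonneg (mul_nonneg hg he.le) (show (0:ℝ) ≤ T^2 - T by nlinarith),
      mul_nonneg (mul_nonneg hg he.le) (show (0:ℝ) ≤ T^2 - e by nlinarith)]
  calc (T⁻¹) ^ 2 * S ≤ (T⁻¹) ^ 2 * ((4 + 5 * g) * e * T ^ 2) :=
        mul_le_mul_of_nonneg_left key (by positivity)
    _ = (4 + 5 * g) * e := by field_simp

/-- Quantitative bound near `∞` when `∞` is of type `π₊`. -/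
lemma quant_of_inftyPiPlus (G : H →L[ℂ] H) {A : H →ₗ.[ℂ] H} {M : Submodule ℂ H}
    (hM : InftyPiPlusCond G A M) :
    ∃ e : ℝ, 0 < e ∧ ∃ R : ℝ, 0 < R ∧ ∀ lam : ℂ, R < ‖lam‖ → ∀ x : A.domain, (x : H) ∈ M →
      ‖A x - lam • (x : H)‖ ≤ e * ‖(x : H)‖ →
        e * ‖(x : H)‖ ^ 2 ≤ brkRe G (x : H) (x : H) := by
  by_contra hcon
  push_neg at hcon
  have key : ∀ n : ℕ, ∃ y : A.domain, ∃ lam : ℂ, ‖(y : H)‖ = 1 ∧ (y : H) ∈ M ∧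
      ((n : ℝ) + 2) < ‖lam‖ ∧
      ‖A y - lam • (y : H)‖ ≤ 1 / ((n : ℝ) + 1) ∧
      brkRe G (y : H) (y : H) < 1 / ((n : ℝ) + 1) := by
    intro n
    obtain ⟨lam, hlam, x, hxM, hxa, hxb⟩ :=
      hcon (1 / ((n : ℝ) + 1)) (by positivity) ((n : ℝ) + 2) (by positivity)
    have hxne : (x : H) ≠ 0 := by
      intro h0
      rw [h0] at hxb
      simp [brkRe, brk] at hxb
    have hxpos : 0 < ‖(x : H)‖ := norm_pos_iff.2 hxne
    obtain ⟨y, hy1, hy2, hy3⟩ := normed_elt x hxne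
    have hcn : ‖(((‖(x : H)‖ : ℂ))⁻¹ : ℂ)‖ = ‖(x : H)‖⁻¹ := by simp
    refine ⟨y, lam, hy1, ?_, hlam, ?_, ?_⟩
    · rw [hy3]; exact M.smul_mem _ hxM
    · rw [hy2 lam, norm_smul, hcn]
      calc ‖(x : H)‖⁻¹ * ‖A x - lam • (x : H)‖
          ≤ ‖(x : H)‖⁻¹ * (1 / ((n : ℝ) + 1) * ‖(x : H)‖) :=
            mul_le_mul_of_nonneg_left hxa (inv_nonneg.2 (norm_nonneg _))
        _ = 1 / ((n : ℝ) + 1) := by field_simp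
    · rw [hy3, brkRe_smul, hcn]
      have h4 : (0 : ℝ) < (‖(x : H)‖⁻¹) ^ 2 := by positivity
      calc (‖(x : H)‖⁻¹) ^ 2 * brkRe G (x : H) (x : H)
          < (‖(x : H)‖⁻¹) ^ 2 * (1 / ((n : ℝ) + 1) * ‖(x : H)‖ ^ 2) :=
            mul_lt_mul_of_pos_left hxb h4
        _ = 1 / ((n : ℝ) + 1) := by field_simp
  choose y lam hy1 hyM hlam hy2 hy3 using key
  -- the norm of `A (y n)` is large
  set t : ℕ → ℝ := fun n => ‖A (y n)‖ with ht
  have hεn : ∀ n : ℕ, (1 : ℝ) / ((n : ℝ) + 1) ≤ 1 := by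
    intro n
    rw [div_le_one (by positivity)]
    have : (0:ℝ) ≤ (n : ℝ) := Nat.cast_nonneg n
    linarith
  have htlam : ∀ n, ‖lam n‖ - 1 ≤ t n := by
    intro n
    have h1 : ‖lam n • ((y n : H))‖ - ‖A (y n) - lam n • ((y n : H))‖ ≤ t n := by
      have := norm_sub_norm_le (lam n • ((y n : H))) (lam n • ((y n : H)) - A (y n))
      have h2 : lam n • ((y n : H)) - (lam n • ((y n : H)) - A (y n)) = A (y n) := by abel
      rw [h2] at this
      rw [← norm_neg (A (y n) - lam n • ((y n : H)))]
      simpa [neg_sub] using this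
    rw [norm_smul, hy1 n, mul_one] at h1
    have := (hy2 n).trans (hεn n)
    linarith
  have ht1 : ∀ n, (1 : ℝ) ≤ t n := by
    intro n
    have := htlam n
    have h2 := hlam n
    have : (0:ℝ) ≤ (n : ℝ) := Nat.cast_nonneg n
    linarith [htlam n, hlam n]
  have htpos : ∀ n, (0 : ℝ) < t n := fun n => lt_of_lt_of_le one_pos (ht1 n)
  have ht2 : ∀ n, ‖lam n‖ ≤ 2 * t n := by
    intro n
    have h2 := hlam n
    have h3 : (0:ℝ) ≤ (n : ℝ) := Nat.cast_nonneg n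
    linarith [htlam n]
  -- the rescaled sequence
  set z : ℕ → A.domain := fun n => ((t n : ℂ))⁻¹ • (y n) with hz
  have hzc : ∀ n, ((z n : H)) = ((t n : ℂ))⁻¹ • ((y n : H)) := fun n => rfl
  have hzA : ∀ n, A (z n) = ((t n : ℂ))⁻¹ • A (y n) := fun n => A.map_smul _ _
  have hzn : ∀ n, ‖((t n : ℂ))⁻¹‖ = (t n)⁻¹ := by
    intro n
    rw [norm_inv, Complex.norm_real, Real.norm_eq_abs, abs_of_pos (htpos n)]
  have hzAnorm : ∀ n, ‖A (z n)‖ = 1 := by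
    intro n
    rw [hzA n, norm_smul, hzn n]
    exact inv_mul_cancel₀ (ne_of_gt (htpos n))
  have hzM : ∀ n, ((z n : H)) ∈ M := by
    intro n
    rw [hzc n]
    exact M.smul_mem _ (hyM n)
  have hz0 : Tendsto (fun n => ((z n : H))) atTop (𝓝 0) := by
    refine squeeze_zero_norm (fun n => ?_) tendsto_one_div_add_atTop_nhds_zero_nat
    rw [hzc n, norm_smul, hzn n, hy1 n, mul_one, inv_eq_one_div]
    apply one_div_le_one_div_of_le (by positivity)
    have h2 := hlam n
    linarith [htlam n]
  have happrox : IsInftyApproxSeq A z := ⟨hzAnorm, hz0⟩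
  have hpos := hM z hzM happrox
  -- bound the quadratic form along `A (z n)`
  have hbound : ∀ n, brkRe G (A (z n)) (A (z n)) ≤ (4 + 5 * ‖G‖) * (1 / ((n : ℝ) + 1)) := by
    intro n
    set εn : ℝ := 1 / ((n : ℝ) + 1) with hεdef
    have hεpos : 0 < εn := by positivity
    set r : H := A (y n) - lam n • ((y n : H)) with hr
    have hrn : ‖r‖ ≤ εn := hy2 n
    have hAy : A (y n) = lam n • ((y n : H)) + r := by rw [hr]; abel
    -- expand
    have hexp : brkRe G (A (y n)) (A (y n)) ≤
        ‖lam n‖ ^ 2 * εn + 2 * ‖G‖ * ‖lam n‖ * εn + ‖G‖ * εn ^ 2 := by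
      rw [hAy, brkRe_add]
      have e1 : brkRe G (lam n • ((y n : H))) (lam n • ((y n : H))) ≤ ‖lam n‖ ^ 2 * εn := by
        rw [brkRe_smul]
        exact mul_le_mul_of_nonneg_left (hy3 n).le (by positivity)
      have hna : ‖lam n • ((y n : H))‖ = ‖lam n‖ := by
        rw [norm_smul, hy1 n, mul_one]
      have hGnn : (0:ℝ) ≤ ‖G‖ := norm_nonneg G
      have hrnn : (0:ℝ) ≤ ‖r‖ := norm_nonneg r
      have hlnn : (0:ℝ) ≤ ‖lam n‖ := norm_nonneg (lam n)
      have e2 : brkRe G (lam n • ((y n : H))) r ≤ ‖G‖ * ‖lam n‖ * εn := by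
        have h5 := le_of_abs_le (abs_brkRe_le G (lam n • ((y n : H))) r)
        rw [hna] at h5
        nlinarith [mul_nonneg hGnn hlnn]
      have e3 : brkRe G r (lam n • ((y n : H))) ≤ ‖G‖ * ‖lam n‖ * εn := by
        have h5 := le_of_abs_le (abs_brkRe_le G r (lam n • ((y n : H))))
        rw [hna] at h5
        nlinarith [mul_nonneg hGnn hlnn]
      have e4 : brkRe G r r ≤ ‖G‖ * εn ^ 2 := by
        have h5 := le_of_abs_le (abs_brkRe_le G r r)
        have p4 : (0:ℝ) ≤ ‖G‖ * ((εn - ‖r‖) * (εn + ‖r‖)) :=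
          mul_nonneg hGnn (mul_nonneg (by linarith) (by linarith))
        nlinarith [p4, h5]
      linarith
    -- divide by `t n ^ 2`
    have hsmul : brkRe G (A (z n)) (A (z n)) = ((t n)⁻¹) ^ 2 * brkRe G (A (y n)) (A (y n)) := by
      rw [hzA n, brkRe_smul, hzn n]
    rw [hsmul]
    have hGnn : (0:ℝ) ≤ ‖G‖ := norm_nonneg G
    have hε1 : εn ≤ 1 := by rw [hεdef]; exact hεn n
    exact div_bound_aux hGnn hεpos hε1 (ht1 n) (norm_nonneg (lam n)) (ht2 n) hexp
  have hle : atTop.liminf (fun n => brkRe G (A (z n)) (A (z n))) ≤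
      atTop.liminf (fun n : ℕ => (4 + 5 * ‖G‖) * (1 / ((n : ℝ) + 1))) := by
    refine liminf_le_liminf (Eventually.of_forall hbound) ?_ ?_
    · refine isBoundedUnder_of ⟨-‖G‖, fun n => ?_⟩
      have hb := abs_brkRe_le G (A (z n)) (A (z n))
      rw [hzAnorm n] at hb
      simp only [mul_one] at hb
      exact neg_le_of_abs_le hb
    · refine isCoboundedUnder_ge_of_le atTop (x := 4 + 5 * ‖G‖) (fun n : ℕ => ?_)
      have hGnn : (0:ℝ) ≤ ‖G‖ := norm_nonneg G
      have := hεn n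
      have h0 : (0:ℝ) < 1 / ((n : ℝ) + 1) := by positivity
      nlinarith
  have hlim : Tendsto (fun n : ℕ => (4 + 5 * ‖G‖) * (1 / ((n : ℝ) + 1))) atTop (𝓝 0) := by
    have h0 := tendsto_one_div_add_atTop_nhds_zero_nat.const_mul (4 + 5 * ‖G‖)
    simpa using h0
  rw [hlim.liminf_eq] at hle
  linarith

end Helpers

/-- Master lemma: the `π₊` case of Statement 3 (no selfadjointness, closedness or
completeness needed). -/
lemma master (G : H →L[ℂ] H) (A : H →ₗ.[ℂ] H)
    (K : Set (OnePoint ℂ)) (hK : IsCompact K)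
    (hsub : K ∩ extSigmaAp A ⊆ extPiPlus G A) :
    ∃ U : Set (OnePoint ℂ), IsOpen U ∧ K ⊆ U ∧
      ∃ H0 : Submodule ℂ H, FinCodim H0 ∧ ∃ ε : ℝ, 0 < ε ∧
      (∀ l : ℂ, (l : OnePoint ℂ) ∈ U → ∀ x : A.domain, (x : H) ∈ H0 →
        ‖A x - l • (x : H)‖ ≤ ε * ‖(x : H)‖ →
          ε * ‖(x : H)‖ ^ 2 ≤ brkRe G (x : H) (x : H)) ∧
      U ∩ extSigmaAp A ⊆ extPiPlus G A := by
  classical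
  have key : ∀ p : OnePoint ℂ, p ∈ K → ∃ (V : Set (OnePoint ℂ)) (M : Submodule ℂ H) (e : ℝ),
      IsOpen V ∧ p ∈ V ∧ (∞ ∈ V → p = ∞) ∧ FinCodim M ∧ 0 < e ∧
      ∀ l : ℂ, (l : OnePoint ℂ) ∈ V → ∀ x : A.domain, (x : H) ∈ M →
        ‖A x - l • (x : H)‖ ≤ e * ‖(x : H)‖ →
          e * ‖(x : H)‖ ^ 2 ≤ brkRe G (x : H) (x : H) := by
    intro p hp
    induction p using OnePoint.rec with
    | infty =>
      by_cases hb : IsBoundedOp A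
      · obtain ⟨C, hC⟩ := hb
        refine ⟨((↑) '' Metric.closedBall (0 : ℂ) (max C 0 + 1))ᶜ, ⊤, 1 / 2,
          OnePoint.isOpen_compl_image_coe.2
            ⟨Metric.isClosed_closedBall, isCompact_closedBall _ _⟩,
          fun hh => OnePoint.infty_notMem_image_coe hh, fun _ => rfl, finCodim_top,
          by norm_num, ?_⟩
        intro l hl x _ hx
        have hlnorm : max C 0 + 1 < ‖l‖ := by
          by_contra hcon
          push_neg at hcon
          exact hl ⟨l, by simpa [Metric.mem_closedBall, dist_zero_right] using hcon, rfl⟩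
        have h1 : ‖l • (x : H)‖ ≤ ‖A x‖ + ‖A x - l • (x : H)‖ := by
          calc ‖l • (x : H)‖ = ‖A x - (A x - l • (x : H))‖ := by rw [sub_sub_cancel]
            _ ≤ ‖A x‖ + ‖A x - l • (x : H)‖ := norm_sub_le _ _
        rw [norm_smul] at h1
        have h3 : ‖A x‖ ≤ max C 0 * ‖(x : H)‖ :=
          (hC x).trans (mul_le_mul_of_nonneg_right (le_max_left _ _) (norm_nonneg _))
        have h4 : ‖(x : H)‖ = 0 := by
          have h5 := norm_nonneg (x : H)
          nlinarith
        have h6 : (x : H) = 0 := norm_eq_zero.1 h4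
        rw [h6]
        simp [brkRe, brk]
      · have hinf : ∞ ∈ extSigmaAp A := Or.inr ⟨rfl, hb⟩
        rcases hsub ⟨hp, hinf⟩ with ⟨l, hl, -⟩ | ⟨-, hPi⟩
        · exact absurd hl (OnePoint.infty_ne_coe l)
        · obtain ⟨-, M, hMf, hcond⟩ := hPi
          obtain ⟨e, he, R, hR, hq⟩ := quant_of_inftyPiPlus G hcond
          refine ⟨((↑) '' Metric.closedBall (0 : ℂ) R)ᶜ, M, e,
            OnePoint.isOpen_compl_image_coe.2
              ⟨Metric.isClosed_closedBall, isCompact_closedBall _ _⟩,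
            fun hh => OnePoint.infty_notMem_image_coe hh, fun _ => rfl, hMf, he, ?_⟩
          intro l hl x hx hxe
          have hlnorm : R < ‖l‖ := by
            by_contra hcon
            push_neg at hcon
            exact hl ⟨l, by simpa [Metric.mem_closedBall, dist_zero_right] using hcon, rfl⟩
          exact hq l hlnorm x hx hxe
    | coe l =>
      by_cases hσ : l ∈ sigmaAp A
      · have hmem : (l : OnePoint ℂ) ∈ K ∩ extSigmaAp A := ⟨hp, Or.inl ⟨l, rfl, hσ⟩⟩
        rcases hsub hmem with ⟨l', hl', hPi⟩ | ⟨habs, -⟩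
        · have hll : l' = l := OnePoint.coe_eq_coe.1 hl'.symm
          rw [hll] at hPi
          obtain ⟨-, M, hMf, hcond⟩ := hPi
          obtain ⟨e, he, hq⟩ := quant_of_piPlus G hcond
          refine ⟨(↑) '' Metric.ball l e, M, e,
            OnePoint.isOpen_image_coe.2 Metric.isOpen_ball,
            mem_image_of_mem _ (Metric.mem_ball_self he),
            fun h => absurd h OnePoint.infty_notMem_image_coe, hMf, he, ?_⟩
          intro l'' hl'' x hx hxe
          obtain ⟨a, ha, hae⟩ := hl''
          have haa : a = l'' := OnePoint.coe_eq_coe.1 hae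
          subst haa
          exact hq a ha x hx hxe
        · exact absurd habs (OnePoint.coe_ne_infty l)
      · obtain ⟨c, hc, hlow⟩ := lower_bound_of_not_sigmaAp hσ
        refine ⟨(↑) '' Metric.ball l (c / 2), ⊤, c / 4,
          OnePoint.isOpen_image_coe.2 Metric.isOpen_ball,
          mem_image_of_mem _ (Metric.mem_ball_self (by linarith)),
          fun h => absurd h OnePoint.infty_notMem_image_coe, finCodim_top,
          by linarith, ?_⟩
        intro l'' hl'' x _ hxe
        obtain ⟨a, ha, hae⟩ := hl''
        have haa : a = l'' := OnePoint.coe_eq_coe.1 hae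
        subst haa
        rw [Metric.mem_ball, dist_eq_norm] at ha
        have h1 : A x - l • (x : H) = (A x - a • (x : H)) + (a - l) • (x : H) := by
          rw [sub_smul]
          abel
        have h2 : ‖A x - l • (x : H)‖ ≤ c / 4 * ‖(x : H)‖ + c / 2 * ‖(x : H)‖ := by
          rw [h1]
          refine (norm_add_le _ _).trans (add_le_add hxe ?_)
          rw [norm_smul]
          exact mul_le_mul_of_nonneg_right ha.le (norm_nonneg _)
        have h3 := hlow x
        have h4 : ‖(x : H)‖ = 0 := by
          have h5 := norm_nonneg (x : H)
          nlinarith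
        have h6 : (x : H) = 0 := norm_eq_zero.1 h4
        rw [h6]
        simp [brkRe, brk]
  choose V M e h1 h2 h3 h4 h5 h6 using fun i : K => key i i.2
  obtain ⟨t, hKt⟩ := hK.elim_finite_subcover V h1
    (fun p hp => mem_iUnion.2 ⟨⟨p, hp⟩, h2 ⟨p, hp⟩⟩)
  have hH0 : ∀ s : Finset K, FinCodim (s.inf M) := by
    intro s
    induction s using Finset.induction_on with
    | empty => simpa [Finset.inf_empty] using (finCodim_top (H := H))
    | insert _ _ ha ih =>
      rw [Finset.inf_insert]
      exact finCodim_inf (h4 _) ih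
  have hεall : ∀ s : Finset K, ∃ ee : ℝ, 0 < ee ∧ ∀ i ∈ s, ee ≤ e i := by
    intro s
    induction s using Finset.induction_on with
    | empty => exact ⟨1, one_pos, by simp⟩
    | insert a s ha ih =>
      obtain ⟨ee, hee, hle⟩ := ih
      refine ⟨min (e a) ee, lt_min (h5 a) hee, ?_⟩
      intro i hi
      rcases Finset.mem_insert.1 hi with rfl | hi
      · exact min_le_left _ _
      · exact (min_le_right _ _).trans (hle i hi)
  obtain ⟨ε, hε, hεle⟩ := hεall t
  refine ⟨⋃ i ∈ t, V i, isOpen_biUnion fun i _ => h1 i, hKt, t.inf M, hH0 t, ε, hε, ?_, ?_⟩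
  · intro l hl x hx hxe
    obtain ⟨i, hit, hVi⟩ := mem_iUnion₂.1 hl
    have hxM : (x : H) ∈ M i := (Finset.inf_le hit : t.inf M ≤ M i) hx
    have hxe' : ‖A x - l • (x : H)‖ ≤ e i * ‖(x : H)‖ :=
      hxe.trans (mul_le_mul_of_nonneg_right (hεle i hit) (norm_nonneg _))
    have := h6 i l hVi x hxM hxe'
    have hsq : (0 : ℝ) ≤ ‖(x : H)‖ ^ 2 := sq_nonneg _
    nlinarith [hεle i hit]
  · rintro p ⟨hpU, hpS⟩
    rcases hpS with ⟨l, rfl, hσ⟩ | ⟨rfl, hb⟩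
    · refine Or.inl ⟨l, rfl, hσ, t.inf M, hH0 t, ?_⟩
      intro x hx hax
      obtain ⟨hn, hto⟩ := hax
      have hev : ∀ᶠ n in atTop, ‖A (x n) - l • (x n : H)‖ < ε :=
        hto.norm.eventually (gt_mem_nhds (by simpa using hε))
      have hev2 : ∀ᶠ n in atTop, ε ≤ brkRe G ((x n : H)) ((x n : H)) := by
        refine hev.mono fun n hn2 => ?_
        have h8 : ‖A (x n) - l • ((x n : H))‖ ≤ ε * ‖((x n : H))‖ := by
          rw [hn n, mul_one]
          exact hn2.le
        have h10 : ε * ‖((x n : H))‖ ^ 2 ≤ brkRe G ((x n : H)) ((x n : H)) := by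
          obtain ⟨i, hit, hVi⟩ := mem_iUnion₂.1 hpU
          have hxM : ((x n : H)) ∈ M i := (Finset.inf_le hit : t.inf M ≤ M i) (hx n)
          have hxe' : ‖A (x n) - l • ((x n : H))‖ ≤ e i * ‖((x n : H))‖ :=
            h8.trans (mul_le_mul_of_nonneg_right (hεle i hit) (norm_nonneg _))
          have h11 := h6 i l hVi (x n) hxM hxe'
          have hsq : (0 : ℝ) ≤ ‖((x n : H))‖ ^ 2 := sq_nonneg _
          nlinarith [hεle i hit]
        rw [hn n] at h10
        simpa using h10
      have hcob : atTop.IsCoboundedUnder (· ≥ ·)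
          (fun n => brkRe G ((x n : H)) ((x n : H))) := by
        refine isCoboundedUnder_ge_of_le atTop (x := ‖G‖) fun n => ?_
        have hbnd := abs_brkRe_le G ((x n : H)) ((x n : H))
        rw [hn n] at hbnd
        simpa using le_of_abs_le hbnd
      have := le_liminf_of_le hcob hev2
      linarith
    · obtain ⟨i, hit, hVi⟩ := mem_iUnion₂.1 hpU
      have hiK : (i : OnePoint ℂ) ∈ K := i.2
      have hieq : (i : OnePoint ℂ) = ∞ := h3 i hVi
      rw [hieq] at hiK
      exact hsub ⟨hiK, Or.inr ⟨rfl, hb⟩⟩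

/-- `π₋` conditions are `π₊` conditions for `-G`. -/
lemma piMinusCond_iff_neg (G : H →L[ℂ] H) (A : H →ₗ.[ℂ] H) (l : ℂ) (M : Submodule ℂ H) :
    PiMinusCond G A l M ↔ PiPlusCond (-G) A l M := by
  constructor
  · intro h x hx hax
    have h0 := h x hx hax
    have hb : ∀ n, |brkRe G ((x n : H)) ((x n : H))| ≤ ‖G‖ := fun n => by
      have hbb := abs_brkRe_le G ((x n : H)) ((x n : H))
      rw [hax.1 n] at hbb
      simpa using hbb
    have h1 := (limsup_neg_iff_liminf_pos hb).1 h0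
    have h2 : (fun n => brkRe (-G) ((x n : H)) ((x n : H))) =
        fun n => -brkRe G ((x n : H)) ((x n : H)) := funext fun n => brkRe_neg_op G _ _
    rw [h2]
    exact h1
  · intro h x hx hax
    have h0 := h x hx hax
    have hb : ∀ n, |brkRe G ((x n : H)) ((x n : H))| ≤ ‖G‖ := fun n => by
      have hbb := abs_brkRe_le G ((x n : H)) ((x n : H))
      rw [hax.1 n] at hbb
      simpa using hbb
    have h2 : (fun n => brkRe (-G) ((x n : H)) ((x n : H))) =
        fun n => -brkRe G ((x n : H)) ((x n : H)) := funext fun n => brkRe_neg_op G _ _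
    rw [h2] at h0
    exact (limsup_neg_iff_liminf_pos hb).2 h0

lemma inftyPiMinusCond_iff_neg (G : H →L[ℂ] H) (A : H →ₗ.[ℂ] H) (M : Submodule ℂ H) :
    InftyPiMinusCond G A M ↔ InftyPiPlusCond (-G) A M := by
  constructor
  · intro h x hx hax
    have h0 := h x hx hax
    have hb : ∀ n, |brkRe G (A (x n)) (A (x n))| ≤ ‖G‖ := fun n => by
      have hbb := abs_brkRe_le G (A (x n)) (A (x n))
      rw [hax.1 n] at hbb
      simpa using hbb
    have h1 := (limsup_neg_iff_liminf_pos hb).1 h0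
    have h2 : (fun n => brkRe (-G) (A (x n)) (A (x n))) =
        fun n => -brkRe G (A (x n)) (A (x n)) := funext fun n => brkRe_neg_op G _ _
    rw [h2]
    exact h1
  · intro h x hx hax
    have h0 := h x hx hax
    have hb : ∀ n, |brkRe G (A (x n)) (A (x n))| ≤ ‖G‖ := fun n => by
      have hbb := abs_brkRe_le G (A (x n)) (A (x n))
      rw [hax.1 n] at hbb
      simpa using hbb
    have h2 : (fun n => brkRe (-G) (A (x n)) (A (x n))) =
        fun n => -brkRe G (A (x n)) (A (x n)) := funext fun n => brkRe_neg_op G _ _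
    rw [h2] at h0
    exact (limsup_neg_iff_liminf_pos hb).2 h0

lemma extPiMinus_eq_neg (G : H →L[ℂ] H) (A : H →ₗ.[ℂ] H) :
    extPiMinus G A = extPiPlus (-G) A := by
  ext p
  refine or_congr (exists_congr fun l => and_congr Iff.rfl ?_)
    (and_congr Iff.rfl ?_)
  · exact and_congr Iff.rfl (exists_congr fun M => and_congr Iff.rfl
      (piMinusCond_iff_neg G A l M))
  · exact and_congr Iff.rfl (exists_congr fun M => and_congr Iff.rfl
      (inftyPiMinusCond_iff_neg G A M))


/-- Compact sets meeting the extended approximate point spectrum only in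
spectral points of type `π₊` (`π₋`). -/
theorem statement_3 [CompleteSpace H] (G : H →L[ℂ] H) (hG : IsSelfAdjoint G)
    (A : H →ₗ.[ℂ] H) (hAc : A.IsClosed) (hAd : Dense (A.domain : Set H))
    (K : Set (OnePoint ℂ)) (hK : IsCompact K) :
    (K ∩ extSigmaAp A ⊆ extPiPlus G A →
      ∃ U : Set (OnePoint ℂ), IsOpen U ∧ K ⊆ U ∧
        ∃ H0 : Submodule ℂ H, FinCodim H0 ∧ ∃ ε : ℝ, 0 < ε ∧
        (∀ l : ℂ, (l : OnePoint ℂ) ∈ U → ∀ x : A.domain, (x : H) ∈ H0 →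
          ‖A x - l • (x : H)‖ ≤ ε * ‖(x : H)‖ →
            ε * ‖(x : H)‖ ^ 2 ≤ brkRe G (x : H) (x : H)) ∧
        U ∩ extSigmaAp A ⊆ extPiPlus G A) ∧
    (K ∩ extSigmaAp A ⊆ extPiMinus G A →
      ∃ U : Set (OnePoint ℂ), IsOpen U ∧ K ⊆ U ∧
        ∃ H0 : Submodule ℂ H, FinCodim H0 ∧ ∃ ε : ℝ, 0 < ε ∧
        (∀ l : ℂ, (l : OnePoint ℂ) ∈ U → ∀ x : A.domain, (x : H) ∈ H0 →
          ‖A x - l • (x : H)‖ ≤ ε * ‖(x : H)‖ →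
            ε * ‖(x : H)‖ ^ 2 ≤ -brkRe G (x : H) (x : H)) ∧
        U ∩ extSigmaAp A ⊆ extPiMinus G A) := by
  constructor
  · intro hsub
    exact master G A K hK hsub
  · intro hsub
    have hsub' : K ∩ extSigmaAp A ⊆ extPiPlus (-G) A := by
      rw [← extPiMinus_eq_neg]
      exact hsub
    obtain ⟨U, hUo, hKU, H0, hH0, ε, hε, hq, hincl⟩ := master (-G) A K hK hsub'
    refine ⟨U, hUo, hKU, H0, hH0, ε, hε, ?_, ?_⟩
    · intro l hl x hx hn
      have h := hq l hl x hx hn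
      rwa [brkRe_neg_op] at h
    · rw [extPiMinus_eq_neg]
      exact hincl

end Paper
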